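/- Let ((Ψ_i)_i,(Y_i,z_i)_i) be a feasible solution of the affinely restricted problem P_AT. Defining the stagewise map R_j(s_j) := Y_j s_j + z_j and the policies Γ_{i,t}(ξ_i^{t−1}, s_{N_i}^t) := Ψ_{i,t}(ξ_i^{t−1}, [R_j(s_j)^t]_{j∈N_i}), the solution ((Γ_i)_i,(Y_i,z_i)_i) is feasible for the auxiliary-uncertainty problem P_S and attains the same objective value. Combining with the converse construction (substituting L_j = R_j^{−1}), the two problems are equivalent and val(P_AT) = val(P_S). -/

import Mathlib

open scoped BigOperators

/-- The `q`-norm used in the cost: `q = 1` (when `qOne = true`) gives the sum of absolute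
values, `q = ∞` (when `qOne = false`) gives the sup norm. -/
noncomputable def normQ (qOne : Bool) {n : ℕ} (v : Fin n → ℝ) : ℝ :=
  if qOne then ∑ k, |v k| else ‖v‖

/-- The data of a network of `M` interconnected linear systems over `T` stages:
dynamics matrices, operational constraints, costs, polyhedral uncertainty sets (nonempty and
compact), the neighbour sets `Nbr` and the precedent sets `Nbar` (characterized as the
smallest family containing each agent and nested along the neighbour relation). -/
structure Sys where
  M : ℕ
  T : ℕ
  hM : 1 ≤ M
  hT : 1 ≤ T
  nx : Fin M → ℕ
  nu : Fin M → ℕ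
  nξ : Fin M → ℕ
  xinit : ∀ i : Fin M, Fin (nx i) → ℝ
  Nbr : Fin M → Finset (Fin M)
  Nbar : Fin M → Finset (Fin M)
  Nbar_self : ∀ i, i ∈ Nbar i
  Nbar_nested : ∀ i, ∀ j ∈ Nbr i, Nbar j ⊆ Nbar i
  Nbar_min : ∀ P : Fin M → Finset (Fin M),
    (∀ i, i ∈ P i) → (∀ i, ∀ j ∈ Nbr i, P j ⊆ P i) → ∀ i, Nbar i ⊆ P i
  A : ∀ i : Fin M, Fin T → Matrix (Fin (nx i)) (Fin (nx i)) ℝ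
  B : ∀ i : Fin M, Fin T → ∀ j : Fin M, Matrix (Fin (nx i)) (Fin (nx j)) ℝ
  D : ∀ i : Fin M, Fin T → Matrix (Fin (nx i)) (Fin (nu i)) ℝ
  E : ∀ i : Fin M, Fin T → Matrix (Fin (nx i)) (Fin (nξ i)) ℝ
  nc : Fin M → ℕ
  Hx : ∀ i : Fin M, Matrix (Fin (nc i)) (Fin (T+1) × Fin (nx i)) ℝ
  Hu : ∀ i : Fin M, Matrix (Fin (nc i)) (Fin T × Fin (nu i)) ℝ
  hvec : ∀ i : Fin M, Fin (nc i) → ℝ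
  qOne : Bool
  nq : Fin M → ℕ
  nr : Fin M → ℕ
  Q : ∀ i : Fin M, Matrix (Fin (nq i)) (Fin (nx i)) ℝ
  R : ∀ i : Fin M, Matrix (Fin (nr i)) (Fin (nu i)) ℝ
  nW : Fin M → ℕ
  W : ∀ i : Fin M, Matrix (Fin (nW i)) (Fin T × Fin (nξ i)) ℝ
  wvec : ∀ i : Fin M, Fin (nW i) → ℝ
  Xi_nonempty : ∀ i : Fin M,
    {ξ : Fin T → Fin (nξ i) → ℝ |
      ∀ r, wvec i r ≤ ∑ p : Fin T × Fin (nξ i), W i r p * ξ p.1 p.2}.Nonempty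
  Xi_compact : ∀ i : Fin M,
    IsCompact {ξ : Fin T → Fin (nξ i) → ℝ |
      ∀ r, wvec i r ≤ ∑ p : Fin T × Fin (nξ i), W i r p * ξ p.1 p.2}

namespace Sys

variable (S : Sys)

/-- State trajectories of agent `i` (stages `1, …, T+1`, zero-indexed). -/
abbrev StateTraj (i : Fin S.M) := Fin (S.T+1) → Fin (S.nx i) → ℝ

/-- Input trajectories of agent `i`. -/
abbrev InputTraj (i : Fin S.M) := Fin S.T → Fin (S.nu i) → ℝ

/-- Uncertainty trajectories of agent `i`. -/
abbrev NoiseTraj (i : Fin S.M) := Fin S.T → Fin (S.nξ i) → ℝ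

/-- Families of (belief) state trajectories, one for each agent. -/
abbrev Beliefs := ∀ j : Fin S.M, Fin (S.T+1) → Fin (S.nx j) → ℝ

/-- Joint uncertainty trajectories. -/
abbrev NoiseAll := ∀ j : Fin S.M, S.NoiseTraj j

/-- The polyhedral uncertainty set `Ξ_i = {ξ : W_i ξ ≥ w_i}`. -/
def Xi (i : Fin S.M) : Set (S.NoiseTraj i) :=
  {ξ | ∀ r, S.wvec i r ≤ ∑ p : Fin S.T × Fin (S.nξ i), S.W i r p * ξ p.1 p.2}

/-- The joint uncertainty set `Ξ_M = ∏_i Ξ_i`. -/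
def XiM : Set S.NoiseAll := {ξ | ∀ j, ξ j ∈ S.Xi j}

/-- The operational constraint set `O_i`: `H_{x,i} x_i + H_{u,i} u_i ≤ h_i`. -/
def InO (i : Fin S.M) (x : S.StateTraj i) (u : S.InputTraj i) : Prop :=
  ∀ r, (∑ p : Fin (S.T+1) × Fin (S.nx i), S.Hx i r p * x p.1 p.2)
      + (∑ p : Fin S.T × Fin (S.nu i), S.Hu i r p * u p.1 p.2) ≤ S.hvec i r

/-- The cost `J_i(x_i, u_i) = ∑_{t=1}^T (‖Q_i x_{i,t}‖_q + ‖R_i u_{i,t}‖_q)`. -/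
noncomputable def cost (i : Fin S.M) (x : S.StateTraj i) (u : S.InputTraj i) : ℝ :=
  ∑ t : Fin S.T,
    (normQ S.qOne ((S.Q i).mulVec (x t.castSucc)) + normQ S.qOne ((S.R i).mulVec (u t)))

/-- Closed-loop joint dynamics: state of each agent at (zero-based) time `t`,
given inputs `u` and uncertainties `ξ`. -/
noncomputable def jointAux (u : ∀ i : Fin S.M, S.InputTraj i) (ξ : S.NoiseAll) :
    ℕ → ∀ i : Fin S.M, Fin (S.nx i) → ℝ
  | 0 => fun i => S.xinit i
  | (t+1) => fun i =>
      if h : t < S.T then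
        (S.A i ⟨t, h⟩).mulVec (jointAux u ξ t i)
        + ∑ j ∈ S.Nbr i, (S.B i ⟨t, h⟩ j).mulVec (jointAux u ξ t j)
        + (S.D i ⟨t, h⟩).mulVec (u i ⟨t, h⟩)
        + (S.E i ⟨t, h⟩).mulVec (ξ i ⟨t, h⟩)
      else 0

/-- Policies with access to the full uncertainty history (centralized /
partially nested information, depending on the causality requirement imposed). -/
abbrev CPolicy := ∀ i : Fin S.M, Fin S.T → S.NoiseAll → Fin (S.nu i) → ℝ

/-- Closed-loop inputs of a centralized/partially nested policy. -/
noncomputable def clInput (Φ : S.CPolicy) (ξ : S.NoiseAll) (i : Fin S.M) : S.InputTraj i :=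
  fun t => Φ i t ξ

/-- Closed-loop state trajectories of a centralized/partially nested policy. -/
noncomputable def clState (Φ : S.CPolicy) (ξ : S.NoiseAll) (i : Fin S.M) : S.StateTraj i :=
  fun τ => S.jointAux (fun i' t => Φ i' t ξ) ξ τ.val i

/-- Strict causality: `Φ_{i,t}` is a function of `ξ_M^{t-1}` only. -/
def CCausal (Φ : S.CPolicy) : Prop :=
  ∀ i (t : Fin S.T) (ξ ξ' : S.NoiseAll),
    (∀ j : Fin S.M, ∀ τ : Fin S.T, (τ : ℕ) < (t : ℕ) → ξ j τ = ξ' j τ) →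
    Φ i t ξ = Φ i t ξ'

/-- Partially nested causality: `Φ_{i,t}` is a function of `ξ_{N̄_i}^{t-1}` only. -/
def PNCausal (Φ : S.CPolicy) : Prop :=
  ∀ i (t : Fin S.T) (ξ ξ' : S.NoiseAll),
    (∀ j ∈ S.Nbar i, ∀ τ : Fin S.T, (τ : ℕ) < (t : ℕ) → ξ j τ = ξ' j τ) →
    Φ i t ξ = Φ i t ξ'

/-- Robust feasibility of the closed loop: operational constraints hold for every
`ξ_M ∈ Ξ_M`. -/
def feasRobust (Φ : S.CPolicy) : Prop :=
  ∀ ξ ∈ S.XiM, ∀ i, S.InO i (S.clState Φ ξ i) (S.clInput Φ ξ i)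

/-- Feasibility for the centralized problem `P_C`. -/
def feasC (Φ : S.CPolicy) : Prop := S.CCausal Φ ∧ S.feasRobust Φ

/-- Feasibility for the partially nested problem `P_PN`. -/
def feasPN (Φ : S.CPolicy) : Prop := S.PNCausal Φ ∧ S.feasRobust Φ

/-- Objective of `P_C`: `∑_i sup_{ξ_M ∈ Ξ_M} J_i`. -/
noncomputable def objC (Φ : S.CPolicy) : EReal :=
  ∑ i : Fin S.M,
    sSup ((fun ξ => ((S.cost i (S.clState Φ ξ i) (S.clInput Φ ξ i) : ℝ) : EReal)) '' S.XiM)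

/-- Objective of `P_PN`: `∑_i sup_{ξ_{N̄_i} ∈ Ξ_{N̄_i}} J_i`, the supremum over
`Ξ_{N̄_i}` being encoded by pinning the coordinates outside `N̄_i` to a fixed
selection `ξ0 ∈ Ξ_M`. -/
noncomputable def objPN (Φ : S.CPolicy) (ξ0 : S.NoiseAll) : EReal :=
  ∑ i : Fin S.M,
    sSup ((fun ξ => ((S.cost i (S.clState Φ ξ i) (S.clInput Φ ξ i) : ℝ) : EReal)) ''
      {ξ | ξ ∈ S.XiM ∧ ∀ j ∉ S.Nbar i, ξ j = ξ0 j})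

/-- Optimal value of the centralized problem `P_C`. -/
noncomputable def valC : EReal := sInf {v : EReal | ∃ Φ : S.CPolicy, S.feasC Φ ∧ v = S.objC Φ}

/-- Optimal value of the partially nested problem `P_PN`. -/
noncomputable def valPN (ξ0 : S.NoiseAll) : EReal :=
  sInf {v : EReal | ∃ Φ : S.CPolicy, S.feasPN Φ ∧ v = S.objPN Φ ξ0}

end Sys
namespace Sys

variable (S : Sys)

/-- Policies of the local information exchange problem: `Ψ_{i,t}` sees the own
uncertainty trajectory and the neighbours' belief trajectories. -/
abbrev LPolicy := ∀ i : Fin S.M, Fin S.T → S.NoiseTraj i → S.Beliefs → Fin (S.nu i) → ℝ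

/-- Causality for local policies: `Ψ_{i,t}` depends only on `ξ_i^{t-1}` and
`ζ_{N_i}^t`. -/
def LCausal (Ψ : S.LPolicy) : Prop :=
  ∀ i (t : Fin S.T) (ξ ξ' : S.NoiseTraj i) (ζ ζ' : S.Beliefs),
    (∀ τ : Fin S.T, (τ : ℕ) < (t : ℕ) → ξ τ = ξ' τ) →
    (∀ j ∈ S.Nbr i, ∀ τ : Fin (S.T+1), (τ : ℕ) ≤ (t : ℕ) → ζ j τ = ζ' j τ) →
    Ψ i t ξ ζ = Ψ i t ξ' ζ'

/-- The dynamics `f_i`: state of agent `i` at (zero-based) time `t`, driven by the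
neighbour (belief) trajectories `ζ`, inputs `u` and uncertainties `ξ`. -/
noncomputable def trajAux (i : Fin S.M) (ζ : S.Beliefs) (u : S.InputTraj i)
    (ξ : S.NoiseTraj i) : ℕ → Fin (S.nx i) → ℝ
  | 0 => S.xinit i
  | (t+1) =>
      if h : t < S.T then
        (S.A i ⟨t, h⟩).mulVec (trajAux i ζ u ξ t)
        + ∑ j ∈ S.Nbr i, (S.B i ⟨t, h⟩ j).mulVec (ζ j ⟨t, Nat.lt_succ_of_lt h⟩)
        + (S.D i ⟨t, h⟩).mulVec (u ⟨t, h⟩)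
        + (S.E i ⟨t, h⟩).mulVec (ξ ⟨t, h⟩)
      else 0

/-- The state trajectory `f_i(ζ_{N_i}, u_i, ξ_i)`. -/
noncomputable def traj (i : Fin S.M) (ζ : S.Beliefs) (u : S.InputTraj i)
    (ξ : S.NoiseTraj i) : S.StateTraj i := fun τ => S.trajAux i ζ u ξ τ.val

/-- Closed-loop inputs of a local policy. -/
noncomputable def lInput (Ψ : S.LPolicy) (i : Fin S.M) (ξ : S.NoiseTraj i) (ζ : S.Beliefs) :
    S.InputTraj i := fun t => Ψ i t ξ ζ

/-- Closed-loop state of a local policy. -/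
noncomputable def lState (Ψ : S.LPolicy) (i : Fin S.M) (ξ : S.NoiseTraj i) (ζ : S.Beliefs) :
    S.StateTraj i := S.traj i ζ (S.lInput Ψ i ξ ζ) ξ

/-- The belief constraint set `X_{N_i} = ∏_{j ∈ N_i} X_j` (coordinates outside `N_i`
are unconstrained; they are irrelevant by causality). -/
def BelSet (X : ∀ i : Fin S.M, Set (S.StateTraj i)) (i : Fin S.M) : Set S.Beliefs :=
  {ζ | ∀ j ∈ S.Nbr i, ζ j ∈ X j}

/-- Robust constraints of the local problem: for every belief in `X_{N_i}` and every
`ξ_i ∈ Ξ_i`, the operational constraints hold and the own state lies in `X_i`. -/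
def feasLcon (Ψ : S.LPolicy) (X : ∀ i : Fin S.M, Set (S.StateTraj i)) : Prop :=
  ∀ i, ∀ ζ ∈ S.BelSet X i, ∀ ξ ∈ S.Xi i,
    S.InO i (S.lState Ψ i ξ ζ) (S.lInput Ψ i ξ ζ) ∧ S.lState Ψ i ξ ζ ∈ X i

/-- Feasibility for the local problem `P_L`: causal policies, nonempty compact
state-forecast sets, and robust constraints. -/
def feasL (Ψ : S.LPolicy) (X : ∀ i : Fin S.M, Set (S.StateTraj i)) : Prop :=
  S.LCausal Ψ ∧ (∀ i, (X i).Nonempty ∧ IsCompact (X i)) ∧ S.feasLcon Ψ X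

/-- Objective of `P_L`: `∑_i sup_{ξ_i ∈ Ξ_i, ζ_{N_i} ∈ X_{N_i}} J_i`. -/
noncomputable def objL (Ψ : S.LPolicy) (X : ∀ i : Fin S.M, Set (S.StateTraj i)) : EReal :=
  ∑ i : Fin S.M,
    sSup ((fun p : S.NoiseTraj i × S.Beliefs =>
        ((S.cost i (S.lState Ψ i p.1 p.2) (S.lInput Ψ i p.1 p.2) : ℝ) : EReal)) ''
      {p | p.1 ∈ S.Xi i ∧ p.2 ∈ S.BelSet X i})

/-- Optimal value of the local problem `P_L`. -/
noncomputable def valL : EReal :=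
  sInf {v : EReal | ∃ (Ψ : S.LPolicy) (X : ∀ i : Fin S.M, Set (S.StateTraj i)),
    S.feasL Ψ X ∧ v = S.objL Ψ X}

end Sys
namespace Sys

variable (S : Sys)

/-- The fixed primitive set `S_i = {s : g_i − G_i s ∈ K_i}` (as a set of state
trajectories of agent `i`). -/
def SsetOf (ℓ : Fin S.M → ℕ) (K : ∀ i : Fin S.M, Set (Fin (ℓ i) → ℝ))
    (G : ∀ i : Fin S.M, Matrix (Fin (ℓ i)) (Fin (S.T+1) × Fin (S.nx i)) ℝ)
    (g : ∀ i : Fin S.M, Fin (ℓ i) → ℝ) (i : Fin S.M) : Set (S.StateTraj i) :=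
  {s | (fun r => g i r - ∑ p : Fin (S.T+1) × Fin (S.nx i), G i r p * s p.1 p.2) ∈ K i}

/-- The affinely transformed state-forecast set
`X_i(Y_i, z_i) = {Y_i s + z_i : s ∈ S_i}` with block-diagonal (stagewise) `Y_i`. -/
def XAT (ℓ : Fin S.M → ℕ) (K : ∀ i : Fin S.M, Set (Fin (ℓ i) → ℝ))
    (G : ∀ i : Fin S.M, Matrix (Fin (ℓ i)) (Fin (S.T+1) × Fin (S.nx i)) ℝ)
    (g : ∀ i : Fin S.M, Fin (ℓ i) → ℝ)
    (Y : ∀ i : Fin S.M, Fin (S.T+1) → Matrix (Fin (S.nx i)) (Fin (S.nx i)) ℝ)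
    (z : ∀ i : Fin S.M, S.StateTraj i) (i : Fin S.M) : Set (S.StateTraj i) :=
  {x | ∃ s ∈ S.SsetOf ℓ K G g i, ∀ t, x t = (Y i t).mulVec (s t) + z i t}

/-- Feasibility for the affinely restricted problem `P_AT`: causal local policies,
positive definite stage blocks `Y_{i,t}`, and the robust constraints of `P_L` with the
state-forecast sets `X_i(Y_i, z_i)`. -/
def feasAT (ℓ : Fin S.M → ℕ) (K : ∀ i : Fin S.M, Set (Fin (ℓ i) → ℝ))
    (G : ∀ i : Fin S.M, Matrix (Fin (ℓ i)) (Fin (S.T+1) × Fin (S.nx i)) ℝ)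
    (g : ∀ i : Fin S.M, Fin (ℓ i) → ℝ)
    (Y : ∀ i : Fin S.M, Fin (S.T+1) → Matrix (Fin (S.nx i)) (Fin (S.nx i)) ℝ)
    (z : ∀ i : Fin S.M, S.StateTraj i) (Ψ : S.LPolicy) : Prop :=
  S.LCausal Ψ ∧ (∀ i t, (Y i t).PosDef) ∧ S.feasLcon Ψ (fun i => S.XAT ℓ K G g Y z i)

/-- Optimal value of `P_AT`. -/
noncomputable def valAT (ℓ : Fin S.M → ℕ) (K : ∀ i : Fin S.M, Set (Fin (ℓ i) → ℝ))
    (G : ∀ i : Fin S.M, Matrix (Fin (ℓ i)) (Fin (S.T+1) × Fin (S.nx i)) ℝ)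
    (g : ∀ i : Fin S.M, Fin (ℓ i) → ℝ) : EReal :=
  sInf {v : EReal | ∃ (Ψ : S.LPolicy)
    (Y : ∀ i : Fin S.M, Fin (S.T+1) → Matrix (Fin (S.nx i)) (Fin (S.nx i)) ℝ)
    (z : ∀ i : Fin S.M, S.StateTraj i),
    S.feasAT ℓ K G g Y z Ψ ∧ v = S.objL Ψ (fun i => S.XAT ℓ K G g Y z i)}

/-- The stagewise affine map `R_j(s_j) = Y_j s_j + z_j`. -/
noncomputable def Rmap (Y : ∀ i : Fin S.M, Fin (S.T+1) → Matrix (Fin (S.nx i)) (Fin (S.nx i)) ℝ)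
    (z : ∀ i : Fin S.M, S.StateTraj i) (j : Fin S.M) (s : S.StateTraj j) : S.StateTraj j :=
  fun t => (Y j t).mulVec (s t) + z j t

/-- The stagewise inverse map `L_j(ζ_j) = Y_j⁻¹ (ζ_j − z_j)`. -/
noncomputable def Lmap (Y : ∀ i : Fin S.M, Fin (S.T+1) → Matrix (Fin (S.nx i)) (Fin (S.nx i)) ℝ)
    (z : ∀ i : Fin S.M, S.StateTraj i) (j : Fin S.M) (ζ : S.StateTraj j) : S.StateTraj j :=
  fun t => (Y j t)⁻¹.mulVec (ζ t - z j t)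

/-- The auxiliary-uncertainty constraint set `S_{N_i} = ∏_{j ∈ N_i} S_j`. -/
def SBelSet (ℓ : Fin S.M → ℕ) (K : ∀ i : Fin S.M, Set (Fin (ℓ i) → ℝ))
    (G : ∀ i : Fin S.M, Matrix (Fin (ℓ i)) (Fin (S.T+1) × Fin (S.nx i)) ℝ)
    (g : ∀ i : Fin S.M, Fin (ℓ i) → ℝ) (i : Fin S.M) : Set S.Beliefs :=
  {s | ∀ j ∈ S.Nbr i, s j ∈ S.SsetOf ℓ K G g j}

/-- Closed-loop state in the auxiliary-uncertainty problem `P_S`: the beliefs are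
`ζ_j = Y_j s_j + z_j` and the inputs are `Γ_{i,t}(ξ_i^{t-1}, s_{N_i}^t)`. -/
noncomputable def psState
    (Y : ∀ i : Fin S.M, Fin (S.T+1) → Matrix (Fin (S.nx i)) (Fin (S.nx i)) ℝ)
    (z : ∀ i : Fin S.M, S.StateTraj i) (Γ : S.LPolicy) (i : Fin S.M)
    (ξ : S.NoiseTraj i) (s : S.Beliefs) : S.StateTraj i :=
  S.traj i (fun j => S.Rmap Y z j (s j)) (fun t => Γ i t ξ s) ξ

/-- Feasibility for the auxiliary-uncertainty problem `P_S`. -/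
def feasPS (ℓ : Fin S.M → ℕ) (K : ∀ i : Fin S.M, Set (Fin (ℓ i) → ℝ))
    (G : ∀ i : Fin S.M, Matrix (Fin (ℓ i)) (Fin (S.T+1) × Fin (S.nx i)) ℝ)
    (g : ∀ i : Fin S.M, Fin (ℓ i) → ℝ)
    (Y : ∀ i : Fin S.M, Fin (S.T+1) → Matrix (Fin (S.nx i)) (Fin (S.nx i)) ℝ)
    (z : ∀ i : Fin S.M, S.StateTraj i) (Γ : S.LPolicy) : Prop :=
  S.LCausal Γ ∧ (∀ i t, (Y i t).PosDef) ∧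
  ∀ i, ∀ s ∈ S.SBelSet ℓ K G g i, ∀ ξ ∈ S.Xi i,
    S.InO i (S.psState Y z Γ i ξ s) (fun t => Γ i t ξ s) ∧
    S.psState Y z Γ i ξ s ∈ S.XAT ℓ K G g Y z i

/-- Objective of `P_S`: `∑_i sup_{ξ_i ∈ Ξ_i, s_{N_i} ∈ S_{N_i}} J_i`. -/
noncomputable def objPS (ℓ : Fin S.M → ℕ) (K : ∀ i : Fin S.M, Set (Fin (ℓ i) → ℝ))
    (G : ∀ i : Fin S.M, Matrix (Fin (ℓ i)) (Fin (S.T+1) × Fin (S.nx i)) ℝ)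
    (g : ∀ i : Fin S.M, Fin (ℓ i) → ℝ)
    (Y : ∀ i : Fin S.M, Fin (S.T+1) → Matrix (Fin (S.nx i)) (Fin (S.nx i)) ℝ)
    (z : ∀ i : Fin S.M, S.StateTraj i) (Γ : S.LPolicy) : EReal :=
  ∑ i : Fin S.M,
    sSup ((fun p : S.NoiseTraj i × S.Beliefs =>
        ((S.cost i (S.psState Y z Γ i p.1 p.2) (fun t => Γ i t p.1 p.2) : ℝ) : EReal)) ''
      {p | p.1 ∈ S.Xi i ∧ p.2 ∈ S.SBelSet ℓ K G g i})

/-- Optimal value of `P_S`. -/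
noncomputable def valPS (ℓ : Fin S.M → ℕ) (K : ∀ i : Fin S.M, Set (Fin (ℓ i) → ℝ))
    (G : ∀ i : Fin S.M, Matrix (Fin (ℓ i)) (Fin (S.T+1) × Fin (S.nx i)) ℝ)
    (g : ∀ i : Fin S.M, Fin (ℓ i) → ℝ) : EReal :=
  sInf {v : EReal | ∃ (Γ : S.LPolicy)
    (Y : ∀ i : Fin S.M, Fin (S.T+1) → Matrix (Fin (S.nx i)) (Fin (S.nx i)) ℝ)
    (z : ∀ i : Fin S.M, S.StateTraj i),
    S.feasPS ℓ K G g Y z Γ ∧ v = S.objPS ℓ K G g Y z Γ}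

end Sys

/-!
For invertible stage blocks `Y_{j,t}`, the stagewise map `R = (R_j)_j` is a bijection of belief
families with inverse `L = (L_j)_j`, and it maps `S_{N_i}` onto `X_{N_i}`. Precomposing a policy
with a stagewise map preserves causality, so `Ψ ↦ Ψ ∘ R` and `Γ ↦ Γ ∘ L` are mutually inverse
between causal policies; and since `R` only renames the beliefs over which the robust constraints
and the worst-case costs are taken, feasibility and objective are the same on both sides. Hence
the feasible values of `P_AT` and `P_S` coincide, and so do their infima.
-/

theorem Matrix.mulVec_nonsing_inv_mulVec {n α : Type*} [Fintype n] [DecidableEq n] [CommRing α]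
    {A : Matrix n n α} (hA : IsUnit A) (v : n → α) : A.mulVec (A⁻¹.mulVec v) = v := by
  rw [Matrix.mulVec_mulVec, Matrix.mul_nonsing_inv _ ((Matrix.isUnit_iff_isUnit_det _).1 hA),
    Matrix.one_mulVec]

theorem Matrix.nonsing_inv_mulVec_mulVec {n α : Type*} [Fintype n] [DecidableEq n] [CommRing α]
    {A : Matrix n n α} (hA : IsUnit A) (v : n → α) : A⁻¹.mulVec (A.mulVec v) = v := by
  rw [Matrix.mulVec_mulVec, Matrix.nonsing_inv_mul _ ((Matrix.isUnit_iff_isUnit_det _).1 hA),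
    Matrix.one_mulVec]

namespace Sys

variable {S : Sys}

def pullPolicy (e : S.Beliefs → S.Beliefs) (Ψ : S.LPolicy) : S.LPolicy :=
  fun i t ξ s => Ψ i t ξ (e s)

def IsStagewise (e : S.Beliefs → S.Beliefs) : Prop :=
  ∀ s s' j τ, s j τ = s' j τ → e s j τ = e s' j τ

theorem LCausal.pullPolicy {e : S.Beliefs → S.Beliefs} (he : IsStagewise e) {Ψ : S.LPolicy}
    (hΨ : S.LCausal Ψ) : S.LCausal (pullPolicy e Ψ) :=
  fun i t ξ ξ' s s' hξ hs =>
    hΨ i t ξ ξ' (e s) (e s') hξ fun j hj τ hτ => he s s' j τ (hs j hj τ hτ)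

theorem pullPolicy_pullPolicy_of_leftInverse {e e' : S.Beliefs → S.Beliefs}
    (h : Function.LeftInverse e e') (Ψ : S.LPolicy) : pullPolicy e' (pullPolicy e Ψ) = Ψ := by
  funext i t ξ s
  simp only [pullPolicy, h s]

variable {ℓ : Fin S.M → ℕ} {K : ∀ i : Fin S.M, Set (Fin (ℓ i) → ℝ)}
  {G : ∀ i : Fin S.M, Matrix (Fin (ℓ i)) (Fin (S.T+1) × Fin (S.nx i)) ℝ}
  {g : ∀ i : Fin S.M, Fin (ℓ i) → ℝ}
  {Y : ∀ i : Fin S.M, Fin (S.T+1) → Matrix (Fin (S.nx i)) (Fin (S.nx i)) ℝ}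
  {z : ∀ i : Fin S.M, S.StateTraj i}

theorem Lmap_Rmap {j : Fin S.M} (hY : ∀ t, IsUnit (Y j t)) (s : S.StateTraj j) :
    S.Lmap Y z j (S.Rmap Y z j s) = s := by
  funext t
  simp only [Rmap, Lmap, add_sub_cancel_right, Matrix.nonsing_inv_mulVec_mulVec (hY t)]

theorem Rmap_Lmap {j : Fin S.M} (hY : ∀ t, IsUnit (Y j t)) (ζ : S.StateTraj j) :
    S.Rmap Y z j (S.Lmap Y z j ζ) = ζ := by
  funext t
  rw [Rmap, Lmap, Matrix.mulVec_nonsing_inv_mulVec (hY t), sub_add_cancel]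

theorem Rmap_mem_XAT_iff {j : Fin S.M} (hY : ∀ t, IsUnit (Y j t)) {s : S.StateTraj j} :
    S.Rmap Y z j s ∈ S.XAT ℓ K G g Y z j ↔ s ∈ S.SsetOf ℓ K G g j := by
  refine ⟨fun ⟨s', hs', hrep⟩ => ?_, fun hs => ⟨s, hs, fun _ => rfl⟩⟩
  have hR : S.Rmap Y z j s = S.Rmap Y z j s' := funext hrep
  rwa [← Lmap_Rmap hY s, hR, Lmap_Rmap hY s']

variable (S Y z) in
noncomputable def beliefMap : S.Beliefs → S.Beliefs := fun s j => S.Rmap Y z j (s j)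

variable (S Y z) in
noncomputable def beliefInv : S.Beliefs → S.Beliefs := fun ζ j => S.Lmap Y z j (ζ j)

theorem isStagewise_beliefMap : IsStagewise (S.beliefMap Y z) := by
  intro s s' j τ h
  simp only [beliefMap, Rmap, h]

theorem isStagewise_beliefInv : IsStagewise (S.beliefInv Y z) := by
  intro s s' j τ h
  simp only [beliefInv, Lmap, h]

variable (z) in
theorem beliefInv_beliefMap (hY : ∀ i t, IsUnit (Y i t)) :
    Function.LeftInverse (S.beliefInv Y z) (S.beliefMap Y z) :=
  fun s => funext fun j => Lmap_Rmap (hY j) (s j)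

variable (z) in
theorem beliefMap_beliefInv (hY : ∀ i t, IsUnit (Y i t)) :
    Function.LeftInverse (S.beliefMap Y z) (S.beliefInv Y z) :=
  fun ζ => funext fun j => Rmap_Lmap (hY j) (ζ j)

variable (z) in
noncomputable def beliefEquiv (hY : ∀ i t, IsUnit (Y i t)) : S.Beliefs ≃ S.Beliefs where
  toFun := S.beliefMap Y z
  invFun := S.beliefInv Y z
  left_inv := beliefInv_beliefMap z hY
  right_inv := beliefMap_beliefInv z hY

theorem beliefMap_mem_BelSet_XAT_iff (hY : ∀ i t, IsUnit (Y i t)) {i : Fin S.M}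
    {s : S.Beliefs} :
    S.beliefMap Y z s ∈ S.BelSet (S.XAT ℓ K G g Y z) i ↔ s ∈ S.SBelSet ℓ K G g i :=
  forall₂_congr fun j _ => Rmap_mem_XAT_iff (hY j)

theorem image_beliefMap_SBelSet (hY : ∀ i t, IsUnit (Y i t)) (i : Fin S.M) :
    S.beliefMap Y z '' S.SBelSet ℓ K G g i = S.BelSet (S.XAT ℓ K G g Y z) i := by
  have hpre : S.beliefMap Y z ⁻¹' S.BelSet (S.XAT ℓ K G g Y z) i = S.SBelSet ℓ K G g i :=
    Set.ext fun _ => beliefMap_mem_BelSet_XAT_iff hY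
  rw [← hpre]
  exact Set.image_preimage_eq _ (beliefEquiv z hY).surjective

theorem feasPS_pullPolicy_beliefMap_iff (hY : ∀ i t, IsUnit (Y i t)) {Ψ : S.LPolicy} :
    S.feasPS ℓ K G g Y z (pullPolicy (S.beliefMap Y z) Ψ) ↔ S.feasAT ℓ K G g Y z Ψ := by
  have hcausal : S.LCausal (pullPolicy (S.beliefMap Y z) Ψ) ↔ S.LCausal Ψ := by
    refine ⟨fun h => ?_, LCausal.pullPolicy isStagewise_beliefMap⟩
    rw [← pullPolicy_pullPolicy_of_leftInverse (beliefMap_beliefInv z hY) Ψ]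
    exact h.pullPolicy isStagewise_beliefInv
  -- the closed loop of `pullPolicy (beliefMap Y z) Ψ` at `s` is that of `Ψ` at `beliefMap Y z s`
  refine and_congr hcausal (and_congr_right fun _ => forall_congr' fun i => ?_)
  refine Iff.trans ?_ (beliefEquiv z hY).forall_congr_right
  exact forall_congr' fun s => imp_congr_left (beliefMap_mem_BelSet_XAT_iff hY).symm

theorem objPS_pullPolicy_beliefMap (hY : ∀ i t, IsUnit (Y i t)) (Ψ : S.LPolicy) :
    S.objPS ℓ K G g Y z (pullPolicy (S.beliefMap Y z) Ψ) =
      S.objL Ψ (S.XAT ℓ K G g Y z) := by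
  refine Finset.sum_congr rfl fun i _ => congrArg sSup ?_
  rw [← image_beliefMap_SBelSet hY i]
  change _ '' (S.Xi i ×ˢ _) = _ '' (S.Xi i ×ˢ _)
  rw [← Set.image_id (S.Xi i), ← Set.prodMap_image_prod, Set.image_id, Set.image_image]
  rfl

theorem valAT_eq_valPS : S.valAT ℓ K G g = S.valPS ℓ K G g := by
  refine congrArg sInf (Set.ext fun v => ⟨?_, ?_⟩)
  · rintro ⟨Ψ, Y, z, hΨ, rfl⟩
    have hY : ∀ i t, IsUnit (Y i t) := fun i t => (hΨ.2.1 i t).isUnit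
    exact ⟨_, Y, z, (feasPS_pullPolicy_beliefMap_iff hY).2 hΨ,
      (objPS_pullPolicy_beliefMap hY Ψ).symm⟩
  · rintro ⟨Γ, Y, z, hΓ, rfl⟩
    have hY : ∀ i t, IsUnit (Y i t) := fun i t => (hΓ.2.1 i t).isUnit
    have hΓ_eq := pullPolicy_pullPolicy_of_leftInverse (beliefInv_beliefMap z hY) Γ
    refine ⟨_, Y, z, (feasPS_pullPolicy_beliefMap_iff hY).1 (hΓ_eq ▸ hΓ), ?_⟩
    rw [← objPS_pullPolicy_beliefMap hY, hΓ_eq]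

end Sys

theorem affineRestriction_to_auxUncertainty_general (S : Sys)
    (ℓ : Fin S.M → ℕ) (K : ∀ i : Fin S.M, Set (Fin (ℓ i) → ℝ))
    (G : ∀ i : Fin S.M, Matrix (Fin (ℓ i)) (Fin (S.T+1) × Fin (S.nx i)) ℝ)
    (g : ∀ i : Fin S.M, Fin (ℓ i) → ℝ) :
    (∀ (Ψ : S.LPolicy)
      (Y : ∀ i : Fin S.M, Fin (S.T+1) → Matrix (Fin (S.nx i)) (Fin (S.nx i)) ℝ)
      (z : ∀ i : Fin S.M, S.StateTraj i), S.feasAT ℓ K G g Y z Ψ →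
        S.feasPS ℓ K G g Y z (fun i t ξ s => Ψ i t ξ (fun j => S.Rmap Y z j (s j))) ∧
        S.objPS ℓ K G g Y z (fun i t ξ s => Ψ i t ξ (fun j => S.Rmap Y z j (s j)))
          = S.objL Ψ (fun i => S.XAT ℓ K G g Y z i)) ∧
    S.valAT ℓ K G g = S.valPS ℓ K G g := by
  refine ⟨fun Ψ Y z hΨ => ?_, Sys.valAT_eq_valPS⟩
  have hY : ∀ i t, IsUnit (Y i t) := fun i t => (hΨ.2.1 i t).isUnit
  exact ⟨(Sys.feasPS_pullPolicy_beliefMap_iff hY).2 hΨ, Sys.objPS_pullPolicy_beliefMap hY Ψ⟩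

/-- Let `((Ψ_i)_i, (Y_i, z_i)_i)` be a feasible solution of the
affinely restricted problem `P_AT`. With the stagewise maps `R_j(s_j) = Y_j s_j + z_j`
and the policies `Γ_{i,t}(ξ_i^{t-1}, s_{N_i}^t) := Ψ_{i,t}(ξ_i^{t-1}, [R_j(s_j)^t]_{j ∈ N_i})`,
the solution `((Γ_i)_i, (Y_i, z_i)_i)` is feasible for the auxiliary-uncertainty
problem `P_S` and attains the same objective value; combining with the converse
construction, the two problems are equivalent and `val(P_AT) = val(P_S)`. -/
theorem affineRestriction_to_auxUncertainty (S : Sys)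
    (ℓ : Fin S.M → ℕ) (K : ∀ i : Fin S.M, Set (Fin (ℓ i) → ℝ))
    (hKclosed : ∀ i, IsClosed (K i)) (hKconvex : ∀ i, Convex ℝ (K i))
    (hKadd : ∀ i, ∀ a ∈ K i, ∀ b ∈ K i, a + b ∈ K i)
    (hKsmul : ∀ i, ∀ c : ℝ, 0 ≤ c → ∀ a ∈ K i, c • a ∈ K i)
    (G : ∀ i : Fin S.M, Matrix (Fin (ℓ i)) (Fin (S.T+1) × Fin (S.nx i)) ℝ)
    (g : ∀ i : Fin S.M, Fin (ℓ i) → ℝ)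
    (hSne : ∀ i, (S.SsetOf ℓ K G g i).Nonempty)
    (hSconvex : ∀ i, Convex ℝ (S.SsetOf ℓ K G g i))
    (hScompact : ∀ i, IsCompact (S.SsetOf ℓ K G g i)) :
    (∀ (Ψ : S.LPolicy)
      (Y : ∀ i : Fin S.M, Fin (S.T+1) → Matrix (Fin (S.nx i)) (Fin (S.nx i)) ℝ)
      (z : ∀ i : Fin S.M, S.StateTraj i), S.feasAT ℓ K G g Y z Ψ →
        S.feasPS ℓ K G g Y z (fun i t ξ s => Ψ i t ξ (fun j => S.Rmap Y z j (s j))) ∧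
        S.objPS ℓ K G g Y z (fun i t ξ s => Ψ i t ξ (fun j => S.Rmap Y z j (s j)))
          = S.objL Ψ (fun i => S.XAT ℓ K G g Y z i)) ∧
    S.valAT ℓ K G g = S.valPS ℓ K G g :=
  affineRestriction_to_auxUncertainty_general S ℓ K G g
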